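/- For any set of three orthonormal bases {M_i}_{i=1,2,3} of C² forming mutually unbiased bases, there exists a unitary W on C² and a phase-relabelling such that M_1, M_2, M_3 are (up to reordering and phases of basis vectors) W-conjugates of the eigenbases of σ_z, σ_x, σ_y; i.e., every MUB triple in C² is unitarily equivalent to the Pauli eigenbases. -/

import Mathlib

open ComplexOrder Matrix Kronecker BigOperators

/-- l1-norm coherence of a qubit matrix χ in the basis m. -/
noncomputable def cohIn (m : Fin 2 → Fin 2 → ℂ) (χ : Matrix (Fin 2) (Fin 2) ℂ) : ℝ :=
  ∑ i, ∑ j, if i ≠ j then ‖star (m i) ⬝ᵥ χ.mulVec (m j)‖ else 0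

/-- m is an orthonormal basis of C². -/
def ONB (m : Fin 2 → Fin 2 → ℂ) : Prop :=
  ∀ i j, star (m i) ⬝ᵥ m j = if i = j then (1 : ℂ) else 0

/-- B is a triple of mutually unbiased orthonormal bases of C². -/
def MUBtriple (B : Fin 3 → Fin 2 → Fin 2 → ℂ) : Prop :=
  (∀ i, ONB (B i)) ∧
  ∀ i j, i ≠ j → ∀ a b, ‖star (B i a) ⬝ᵥ B j b‖ ^ 2 = 1 / 2

/-- Unnormalized conditional state of B after outcome |u⟩⟨u| of a measurement on A:
p(u) ρ_{B|u} = Tr_A[(|u⟩⟨u| ⊗ I) ρ (|u⟩⟨u| ⊗ I)]. -/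
noncomputable def condB (ρ : Matrix (Fin 2 × Fin 2) (Fin 2 × Fin 2) ℂ)
    (u : Fin 2 → ℂ) : Matrix (Fin 2) (Fin 2) ℂ :=
  Matrix.of fun b b' => ∑ a, ∑ a', (star (u a)) * ρ (a, b) (a', b') * u a'

/-- Σ_{i,a} p(ρ_{B|Λᵢᵃ}) C_{Mᵢ}(ρ_{B|Λᵢᵃ}), written via unnormalized conditional
states (using the homogeneity p C(σ/p) = C(σ) of the l1-coherence). -/
noncomputable def naqcSum (ρ : Matrix (Fin 2 × Fin 2) (Fin 2 × Fin 2) ℂ)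
    (M Λ : Fin 3 → Fin 2 → Fin 2 → ℂ) : ℝ :=
  ∑ i, ∑ a, cohIn (M i) (condB ρ (Λ i a))

/-- The NAQC functional N→, maximized over MUB triples of coherence bases and of
ensemble-generating measurement bases on A. -/
noncomputable def Nfwd (ρ : Matrix (Fin 2 × Fin 2) (Fin 2 × Fin 2) ℂ) : ℝ :=
  sSup {s : ℝ | ∃ M Λ, MUBtriple M ∧ MUBtriple Λ ∧ s = naqcSum ρ M Λ}

/-- Partial trace over the first qubit. -/
noncomputable def ptraceA (ρ : Matrix (Fin 2 × Fin 2) (Fin 2 × Fin 2) ℂ) :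
    Matrix (Fin 2) (Fin 2) ℂ :=
  Matrix.of fun b b' => ∑ a, ρ (a, b) (a, b')

/-- The eigenbases of σ_z, σ_x, σ_y (in this order). -/
noncomputable def pauliZXY : Fin 3 → Fin 2 → Fin 2 → ℂ :=
  ![![![(1 : ℂ), 0], ![(0 : ℂ), 1]],
    ![![1 / (Real.sqrt 2 : ℂ), 1 / (Real.sqrt 2 : ℂ)],
      ![1 / (Real.sqrt 2 : ℂ), -(1 / (Real.sqrt 2 : ℂ))]],
    ![![1 / (Real.sqrt 2 : ℂ), Complex.I / (Real.sqrt 2 : ℂ)],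
      ![1 / (Real.sqrt 2 : ℂ), -(Complex.I / (Real.sqrt 2 : ℂ))]]]

/-! The second vector of an orthonormal basis of `ℂ²` is, up to a phase, the unique unit vector
orthogonal to the first, so it suffices to place the first vectors `e, f, g` of the three bases.
With `t = ⟨e, f⟩`, the vectors `e` and `e' = t⁻¹ f - e` are orthonormal, and the unitary `W`
with columns `e, e'` sends the σ_z and σ_x eigenvectors `(1, 0)` and `(1, 1)/√2` to `e` and
`f / (t √2)`. In the coordinates of `W`, `g = (c₀, c₁)` satisfies `|c₀|² = |c₁|² = 1/2` and
`|c₀ + c₁|² = 1`, which forces `c₁ = ± i c₀`: `g` is a σ_y eigenvector up to a phase. -/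

theorem Matrix.star_mulVec_dotProduct_mulVec_of_mem_unitaryGroup {n α : Type*} [Fintype n]
    [DecidableEq n] [CommRing α] [StarRing α] {W : Matrix n n α} (hW : W ∈ unitaryGroup n α)
    (v w : n → α) : star (W *ᵥ v) ⬝ᵥ (W *ᵥ w) = star v ⬝ᵥ w := by
  rw [star_mulVec, dotProduct_mulVec, vecMul_vecMul, ← star_eq_conjTranspose,
    (mem_unitaryGroup_iff').mp hW, vecMul_one]

theorem Matrix.transpose_of_mulVec {m n α : Type*} [Fintype m] [CommSemiring α]
    (v : m → n → α) (c : m → α) : (of v)ᵀ *ᵥ c = ∑ a, c a • v a := by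
  ext x
  simp [mulVec, dotProduct, mul_comm]

namespace ONB

variable {m : Fin 2 → Fin 2 → ℂ}

theorem transpose_of_mem_unitaryGroup (hm : ONB m) : (of m)ᵀ ∈ unitaryGroup (Fin 2) ℂ := by
  rw [mem_unitaryGroup_iff']
  ext a b
  simpa [mul_apply, one_apply, dotProduct] using hm a b

theorem sum_smul (hm : ONB m) (v : Fin 2 → ℂ) : ∑ a, (star (m a) ⬝ᵥ v) • m a = v := by
  have hU := (mem_unitaryGroup_iff).mp hm.transpose_of_mem_unitaryGroup
  have hv : (of m)ᵀ *ᵥ ((of m)ᵀᴴ *ᵥ v) = v := by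
    rw [mulVec_mulVec, ← star_eq_conjTranspose, hU, one_mulVec]
  rw [transpose_of_mulVec] at hv
  convert hv using 3 with a
  simp [mulVec, dotProduct]

theorem eq_smul_of_dotProduct_eq_zero (hm : ONB m) {i j : Fin 2} (hij : i ≠ j) {v : Fin 2 → ℂ}
    (hv : star (m i) ⬝ᵥ v = 0) : v = (star (m j) ⬝ᵥ v) • m j := by
  conv_lhs => rw [← hm.sum_smul v]
  fin_cases i <;> fin_cases j <;> simp_all

theorem mulVec {W : Matrix (Fin 2) (Fin 2) ℂ} (hm : ONB m) (hW : W ∈ unitaryGroup (Fin 2) ℂ) :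
    ONB fun a => W *ᵥ m a := fun a b => by
  rw [star_mulVec_dotProduct_mulVec_of_mem_unitaryGroup hW, hm a b]

theorem exists_phases_of_eq_smul {n : Fin 2 → Fin 2 → ℂ} (hm : ONB m) (hn : ONB n)
    {k : Fin 2} {φ : ℂ} (hφ : ‖φ‖ = 1) (h0 : m 0 = φ • n k) :
    ∃ phase : Fin 2 → ℂ, (∀ a, ‖phase a‖ = 1) ∧ ∀ a, m a = phase a • n (Equiv.swap 0 k a) := by
  set k' := Equiv.swap 0 k 1
  have hkk' : k ≠ k' := by fin_cases k <;> decide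
  have horth : star (n k) ⬝ᵥ m 1 = 0 := by
    have h := hm 0 1
    rw [h0, star_smul, smul_dotProduct, smul_eq_mul] at h
    exact (mul_eq_zero.mp h).resolve_left (by simp [← norm_ne_zero_iff, hφ])
  have h1 := hn.eq_smul_of_dotProduct_eq_zero hkk' horth
  set c := star (n k') ⬝ᵥ m 1
  have hc : ‖c‖ = 1 := by
    have h := hm 1 1
    rw [h1, star_smul, smul_dotProduct, dotProduct_smul, hn k' k'] at h
    simp only [if_true, smul_eq_mul, mul_one, Complex.star_def, Complex.conj_mul'] at h
    exact (pow_eq_one_iff_of_nonneg (norm_nonneg c) two_ne_zero).mp (by exact_mod_cast h)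
  refine ⟨![φ, c], fun a => ?_, fun a => ?_⟩ <;> fin_cases a
  · exact hφ
  · exact hc
  · simpa using h0
  · exact h1

end ONB

theorem Complex.eq_mul_I_or_eq_neg_mul_I {p q : ℂ} (hpq : normSq q = normSq p)
    (hsum : normSq (p + q) = normSq p + normSq q) : q = p * I ∨ q = -(p * I) := by
  -- The product is `4 (|p|⁴ - Im(p̄ q)²)`, and `hsum` says `Re(p̄ q) = 0`, so `|p̄ q|² = Im(p̄ q)²`.
  have hprod : normSq (q - p * I) * normSq (q + p * I) = 0 := by
    simp only [normSq_apply, add_re, add_im, sub_re, sub_im, mul_re, mul_im, I_re, I_im]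
      at hpq hsum ⊢
    nlinarith [hpq, hsum]
  rcases mul_eq_zero.mp hprod with h | h
  · exact .inl (sub_eq_zero.mp (normSq_eq_zero.mp h))
  · exact .inr (eq_neg_of_add_eq_zero_left (normSq_eq_zero.mp h))

theorem onb_pauliZXY (j : Fin 3) : ONB (pauliZXY j) := by
  have h2 : (Real.sqrt 2 : ℂ) ^ 2 = 2 := by exact_mod_cast Real.sq_sqrt zero_le_two
  intro a b
  fin_cases j <;> fin_cases a <;> fin_cases b <;>
    simp [pauliZXY, dotProduct, Fin.sum_univ_two] <;> field_simp <;> norm_num [h2]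

open Complex in
theorem exists_eq_smul_pauliZXY_two {c : Fin 2 → ℂ} (hc : star c ⬝ᵥ c = 1)
    (hz : ‖star (pauliZXY 0 0) ⬝ᵥ c‖ ^ 2 = 1 / 2) (hx : ‖star (pauliZXY 1 0) ⬝ᵥ c‖ ^ 2 = 1 / 2) :
    ∃ (k : Fin 2) (φ : ℂ), ‖φ‖ = 1 ∧ c = φ • pauliZXY 2 k := by
  have hs : Real.sqrt 2 ^ 2 = 2 := Real.sq_sqrt zero_le_two
  have h0 : normSq (c 0) = 1 / 2 := by simpa [pauliZXY, dotProduct, ← Complex.sq_norm] using hz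
  have h01 : normSq (c 0 + c 1) = 1 := by
    have hx' : star (pauliZXY 1 0) ⬝ᵥ c = (Real.sqrt 2 : ℂ)⁻¹ * (c 0 + c 1) := by
      simp [pauliZXY, dotProduct, Fin.sum_univ_two, mul_add]
    rw [hx', norm_mul, mul_pow, norm_inv, norm_real, Real.norm_of_nonneg
      (Real.sqrt_nonneg 2), inv_pow, hs, Complex.sq_norm] at hx
    linarith
  have hnorm : normSq (c 0) + normSq (c 1) = 1 := by
    simpa [dotProduct, Fin.sum_univ_two, ← normSq_eq_conj_mul_self] using congrArg re hc
  have hφ : ‖c 0 * Real.sqrt 2‖ = 1 := by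
    rw [norm_mul, norm_real, Real.norm_of_nonneg (Real.sqrt_nonneg 2), Complex.norm_def, h0,
      ← Real.sqrt_mul (by norm_num)]
    norm_num
  rcases eq_mul_I_or_eq_neg_mul_I (p := c 0) (q := c 1) (by linarith) (by linarith) with h | h
  · refine ⟨0, _, hφ, ?_⟩
    funext x
    fin_cases x
    · simp [pauliZXY]
    · simp only [Fin.mk_one, pauliZXY, cons_val, cons_val_one, Pi.smul_apply, smul_eq_mul, h]
      field_simp
  · refine ⟨1, _, hφ, ?_⟩
    funext x
    fin_cases x
    · simp [pauliZXY]
    · simp only [Fin.mk_one, pauliZXY, cons_val, cons_val_one, Pi.smul_apply, smul_eq_mul, h]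
      field_simp

theorem exists_unitary_mulVec_pauliZXY_eq_of_unbiased {e f : Fin 2 → ℂ} (he : star e ⬝ᵥ e = 1)
    (hf : star f ⬝ᵥ f = 1) (hef : ‖star e ⬝ᵥ f‖ ^ 2 = 1 / 2) :
    ∃ W ∈ unitaryGroup (Fin 2) ℂ, W *ᵥ pauliZXY 0 0 = e ∧
      ∃ φ : ℂ, ‖φ‖ = 1 ∧ f = φ • W *ᵥ pauliZXY 1 0 := by
  generalize het : star e ⬝ᵥ f = t at hef
  have hfe : star f ⬝ᵥ e = star t := by rw [star_dotProduct, het]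
  have htt : star t * t = 1 / 2 := by
    rw [Complex.star_def, Complex.conj_mul', ← Complex.ofReal_pow, hef]
    norm_num
  have ht : t ≠ 0 := by rintro h; norm_num [h] at htt
  set e' := t⁻¹ • f - e
  have h01 : star e ⬝ᵥ e' = 0 := by
    rw [dotProduct_sub, dotProduct_smul, he, het, smul_eq_mul, inv_mul_cancel₀ ht, sub_self]
  have h11 : star e' ⬝ᵥ e' = 1 := by
    rw [star_sub, star_smul, sub_dotProduct, dotProduct_sub, dotProduct_sub, smul_dotProduct,
      smul_dotProduct, dotProduct_smul, dotProduct_smul, he, hf, hfe, het]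
    have hst : star t ≠ 0 := star_ne_zero.mpr ht
    simp only [smul_eq_mul, mul_one, star_inv₀, ← mul_inv, htt, inv_mul_cancel₀ hst,
      inv_mul_cancel₀ ht]
    norm_num
  have hbasis : ONB ![e, e'] := by
    intro a b
    fin_cases a <;> fin_cases b
    · simpa using he
    · simpa using h01
    · simpa using (star_dotProduct e' e).trans (by rw [h01, star_zero])
    · simpa using h11
  refine ⟨_, hbasis.transpose_of_mem_unitaryGroup, ?_, t * Real.sqrt 2, ?_, ?_⟩
  · rw [transpose_of_mulVec]
    simp [pauliZXY]
  · rw [norm_mul, Complex.norm_real, Real.norm_of_nonneg (Real.sqrt_nonneg _)]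
    refine (pow_eq_one_iff_of_nonneg (by positivity) two_ne_zero).mp ?_
    rw [mul_pow, hef, Real.sq_sqrt zero_le_two]
    norm_num
  · rw [transpose_of_mulVec]
    simp only [pauliZXY, one_div, cons_val_zero, cons_val_one, Fin.sum_univ_two, e']
    rw [← smul_add, add_sub_cancel, smul_smul, smul_smul,
      show t * Real.sqrt 2 * (Real.sqrt 2 : ℂ)⁻¹ * t⁻¹ = 1 by field_simp, one_smul]

theorem exists_eq_smul_mulVec_pauliZXY_two {W : Matrix (Fin 2) (Fin 2) ℂ}
    (hW : W ∈ unitaryGroup (Fin 2) ℂ) {g : Fin 2 → ℂ} (hg : star g ⬝ᵥ g = 1)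
    (hz : ‖star (W *ᵥ pauliZXY 0 0) ⬝ᵥ g‖ ^ 2 = 1 / 2)
    (hx : ‖star (W *ᵥ pauliZXY 1 0) ⬝ᵥ g‖ ^ 2 = 1 / 2) :
    ∃ (k : Fin 2) (φ : ℂ), ‖φ‖ = 1 ∧ g = φ • W *ᵥ pauliZXY 2 k := by
  have hg' : W *ᵥ (Wᴴ *ᵥ g) = g := by
    rw [mulVec_mulVec, ← star_eq_conjTranspose, (mem_unitaryGroup_iff).mp hW, one_mulVec]
  rw [← hg', star_mulVec_dotProduct_mulVec_of_mem_unitaryGroup hW] at hg hz hx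
  obtain ⟨k, φ, hφ, hc⟩ := exists_eq_smul_pauliZXY_two hg hz hx
  exact ⟨k, φ, hφ, by rw [← hg', hc, mulVec_smul]⟩

/-- every MUB triple in C² is unitarily equivalent — up to a
reordering of the bases, reordering of the vectors within each basis, and phases
of the basis vectors — to the Pauli eigenbases of σ_z, σ_x, σ_y. -/
theorem mub_triple_unitarily_pauli (M : Fin 3 → Fin 2 → Fin 2 → ℂ)
    (hM : MUBtriple M) :
    ∃ W : Matrix (Fin 2) (Fin 2) ℂ, W ∈ Matrix.unitaryGroup (Fin 2) ℂ ∧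
      ∃ (π : Equiv.Perm (Fin 3)) (τ : Fin 3 → Equiv.Perm (Fin 2))
        (phase : Fin 3 → Fin 2 → ℂ),
        (∀ i a, ‖phase i a‖ = 1) ∧
        ∀ i a, M i a = phase i a • W.mulVec (pauliZXY (π i) (τ i a)) := by
  obtain ⟨honb, hunb⟩ := hM
  have hunit (i a) : star (M i a) ⬝ᵥ M i a = 1 := by simpa using honb i a a
  obtain ⟨W, hW, hW0, φ, hφ, hW1⟩ := exists_unitary_mulVec_pauliZXY_eq_of_unbiased
    (hunit 0 0) (hunit 1 0) (hunb 0 1 (by decide) 0 0)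
  have hfirst (i) : ∃ (k : Fin 2) (ψ : ℂ), ‖ψ‖ = 1 ∧ M i 0 = ψ • W *ᵥ pauliZXY i k := by
    fin_cases i
    · exact ⟨0, 1, norm_one, by simpa using hW0.symm⟩
    · exact ⟨0, φ, hφ, hW1⟩
    · refine exists_eq_smul_mulVec_pauliZXY_two hW (hunit 2 0) ?_ ?_
      · simpa [hW0] using hunb 0 2 (by decide) 0 0
      · have h12 := hunb 1 2 (by decide) 0 0
        rwa [hW1, star_smul, smul_dotProduct, norm_smul, norm_star, hφ, one_mul] at h12
  choose k ψ hψ hk using hfirst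
  choose phase hphase hM using fun i =>
    (honb i).exists_phases_of_eq_smul ((onb_pauliZXY i).mulVec hW) (hψ i) (hk i)
  exact ⟨W, hW, Equiv.refl _, fun i => Equiv.swap 0 (k i), phase, hphase, hM⟩
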